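/- arXiv:0904.4115 — 9 statements merged into one kernel-verified Lean document; each statement's English description precedes it below -/
import Mathlib

section
/- Let X be an N-valued random variable with E[X] = λ > 0. Define the probability mass function q(x) = (x+1)·P(X = x+1)/λ for x ∈ ℕ. Then q is a probability distribution on ℕ, and for any random variable X* with P(X* = x) = q(x) and any function f : ℕ → ℝ such that X·f(X) is integrable, one has E[X·f(X)] = λ·E[f(X*+1)]. -/
/-!
With `p n = P(X = n)`, the `n = 0` term of `E[X f(X)] = ∑ n p(n) f(n)` vanishes, so shifting the
index gives `∑ (x+1) p(x+1) f(x+1) = λ ∑ q(x) f(x+1) = λ E[f(X*+1)]`; the case `f = 1` is `∑ q = 1`.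
-/

open MeasureTheory

section DiscreteRandomVariable

variable {Ω α E : Type*} [MeasurableSpace Ω] [MeasurableSpace α] [Countable α]
  [MeasurableSingletonClass α] [NormedAddCommGroup E]
  {μ : Measure Ω} {X : Ω → α} {g : α → E}

theorem integral_comp_eq_tsum [NormedSpace ℝ E] [CompleteSpace E] (hX : Measurable X)
    (hg : Integrable (fun ω => g (X ω)) μ) :
    ∫ ω, g (X ω) ∂μ = ∑' a, μ.real {ω | X ω = a} • g a := by
  rw [← integral_map hX.aemeasurable .of_discrete,
    integral_countable ((integrable_map_measure .of_discrete hX.aemeasurable).2 hg)]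
  simp_rw [map_measureReal_apply hX (measurableSet_singleton _)]
  rfl

theorem integrable_comp_iff_summable [IsFiniteMeasure μ] (hX : Measurable X) :
    Integrable (fun ω => g (X ω)) μ ↔ Summable (fun a => μ.real {ω | X ω = a} * ‖g a‖) := by
  refine (integrable_map_measure .of_discrete hX.aemeasurable).symm.trans ?_
  rw [← Measure.sum_smul_dirac (μ.map X), integrable_sum_dirac_iff fun _ => measure_ne_top _ _]
  simp_rw [Measure.map_apply hX (measurableSet_singleton _)]
  rfl

end DiscreteRandomVariable

section NatValued

variable {Ω : Type*} [MeasurableSpace Ω] {μ : Measure Ω} {X : Ω → ℕ} {g : ℕ → ℝ}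

theorem integral_natCast_mul_comp_eq_tsum_succ (hX : Measurable X)
    (hg : Integrable (fun ω => (X ω : ℝ) * g (X ω)) μ) :
    ∫ ω, (X ω : ℝ) * g (X ω) ∂μ =
      ∑' x : ℕ, ((x : ℝ) + 1) * μ.real {ω | X ω = x + 1} * g (x + 1) := by
  rw [integral_comp_eq_tsum (g := fun n : ℕ => (n : ℝ) * g n) hX hg]
  have hsupp : Function.support (fun n : ℕ => μ.real {ω | X ω = n} • ((n : ℝ) * g n)) ⊆
      Set.range Nat.succ := by
    rintro (_ | n) hn
    · simp at hn
    · exact ⟨n, rfl⟩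
  rw [← Nat.succ_injective.tsum_eq hsupp]
  refine tsum_congr fun x => ?_
  push_cast
  ring

theorem summable_succ_mul_of_integrable [IsFiniteMeasure μ] (hX : Measurable X)
    (hg : Integrable (fun ω => (X ω : ℝ) * g (X ω)) μ) :
    Summable fun x : ℕ => ((x : ℝ) + 1) * μ.real {ω | X ω = x + 1} * ‖g (x + 1)‖ := by
  have h := (summable_nat_add_iff 1).2
    ((integrable_comp_iff_summable (g := fun n : ℕ => (n : ℝ) * g n) hX).1 hg)
  refine h.congr fun x => ?_
  rw [norm_mul, Real.norm_natCast]
  push_cast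
  ring

end NatValued

/-- Zero bias transformation: `q(x) = (x+1)·P(X = x+1)/λ` is a probability distribution
on `ℕ`, and any `X*` distributed according to `q` satisfies
`E[X·f(X)] = λ·E[f(X*+1)]` whenever `X·f(X)` is integrable. -/
theorem poisson_zero_bias {Ω Ω' : Type*} [MeasurableSpace Ω] [MeasurableSpace Ω']
    (μ : Measure Ω) (ν : Measure Ω') [IsProbabilityMeasure μ] [IsProbabilityMeasure ν]
    (X : Ω → ℕ) (hX : Measurable X) (hXint : Integrable (fun ω => (X ω : ℝ)) μ)
    (lam : ℝ) (hlam : lam = ∫ ω, (X ω : ℝ) ∂μ) (hpos : 0 < lam)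
    (q : ℕ → ℝ) (hq : ∀ x : ℕ, q x = ((x : ℝ) + 1) * (μ {ω | X ω = x + 1}).toReal / lam) :
    ((∀ x : ℕ, 0 ≤ q x) ∧ (∑' x : ℕ, q x) = 1) ∧
      ∀ (Xs : Ω' → ℕ), Measurable Xs → (∀ x : ℕ, (ν {ω | Xs ω = x}).toReal = q x) →
        ∀ f : ℕ → ℝ, Integrable (fun ω => (X ω : ℝ) * f (X ω)) μ →
          ∫ ω, (X ω : ℝ) * f (X ω) ∂μ = lam * ∫ ω, f (Xs ω + 1) ∂ν := by
  have hq_mul (x : ℕ) : ((x : ℝ) + 1) * μ.real {ω | X ω = x + 1} = lam * q x := by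
    rw [hq, measureReal_def]
    field_simp
  have hshift {f : ℕ → ℝ} (hf : Integrable (fun ω => (X ω : ℝ) * f (X ω)) μ) :
      ∫ ω, (X ω : ℝ) * f (X ω) ∂μ = ∑' x : ℕ, lam * q x * f (x + 1) := by
    simp_rw [integral_natCast_mul_comp_eq_tsum_succ hX hf, hq_mul]
  refine ⟨⟨fun x => by rw [hq]; positivity, ?_⟩, ?_⟩
  · refine mul_left_cancel₀ hpos.ne' ?_
    have hmean := hshift (f := 1) (by simpa using hXint)
    simp only [Pi.one_apply, mul_one] at hmean
    rw [← tsum_mul_left, ← hmean, ← hlam, mul_one]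
  · intro Xs hXs hXs_law f hf
    have hint : Integrable (fun ω => f (Xs ω + 1)) ν := by
      refine (integrable_comp_iff_summable (g := fun x => f (x + 1)) hXs).2 ?_
      refine ((summable_succ_mul_of_integrable hX hf).div_const lam).congr fun x => ?_
      rw [hq_mul, measureReal_def, hXs_law]
      field_simp
    rw [hshift hf, integral_comp_eq_tsum (g := fun x => f (x + 1)) hXs hint, ← tsum_mul_left]
    simp_rw [measureReal_def, hXs_law, smul_eq_mul, mul_assoc]
end

section
/- An ℕ-valued random variable Z follows the Poisson distribution with parameter λ > 0 if and only if E[Z·f(Z)] = λ·E[f(Z+1)] holds for every function f : ℕ → ℝ such that both sides are well defined (e.g., for all bounded f). -/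
open MeasureTheory

/-!
With `p_k = P(Z = k)`, the identity `E[Z f(Z)] = λ E[f(Z+1)]` reads
`∑ k p_k f(k) = λ ∑ p_k f(k+1)`. Testing it on the indicator of `{k+1}` gives the recurrence
`(k+1) p_{k+1} = λ p_k`, whose only solution of total mass one is the Poisson law. Conversely
the Poisson weights `q_k` satisfy this recurrence, so shifting the index by one in `∑ k q_k f(k)`
yields the identity.
-/

noncomputable def poissonWeight (lam : ℝ) (k : ℕ) : ℝ :=
  Real.exp (-lam) * lam ^ k / (k.factorial : ℝ)

section PoissonWeight

variable (lam : ℝ)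

lemma poissonWeight_succ_mul (k : ℕ) :
    poissonWeight lam (k + 1) * (k + 1) = lam * poissonWeight lam k := by
  unfold poissonWeight
  rw [Nat.factorial_succ]
  push_cast
  field_simp
  ring

lemma summable_poissonWeight :
    Summable (poissonWeight lam) :=
  ((Real.summable_pow_div_factorial lam).mul_left (Real.exp (-lam))).congr fun k => by
    unfold poissonWeight
    ring

lemma summable_poissonWeight_mul_nat :
    Summable fun k : ℕ => poissonWeight lam k * k := by
  rw [← summable_nat_add_iff 1]
  simpa only [Nat.cast_add, Nat.cast_one, poissonWeight_succ_mul] using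
    (summable_poissonWeight lam).mul_left lam

lemma summable_poissonWeight_mul_nat_mul {f : ℕ → ℝ} {C : ℝ} (hC : ∀ k, |f k| ≤ C) :
    Summable fun k : ℕ => poissonWeight lam k * (k * f k) := by
  refine Summable.of_norm_bounded ((summable_poissonWeight_mul_nat lam).abs.mul_right C)
    fun k => ?_
  rw [Real.norm_eq_abs, ← mul_assoc, abs_mul]
  exact mul_le_mul_of_nonneg_left (hC k) (abs_nonneg _)

lemma tsum_poissonWeight_mul_nat_mul {f : ℕ → ℝ}
    (hf : Summable fun k : ℕ => poissonWeight lam k * (k * f k)) :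
    ∑' k, poissonWeight lam k * (k * f k) = lam * ∑' k, poissonWeight lam k * f (k + 1) := by
  rw [hf.tsum_eq_zero_add, ← tsum_mul_left]
  simp only [Nat.cast_zero, zero_mul, mul_zero, zero_add]
  refine tsum_congr fun k => ?_
  rw [← mul_assoc, Nat.cast_succ, poissonWeight_succ_mul, mul_assoc]

end PoissonWeight

section Recurrence

variable {p : ℕ → ℝ} {lam : ℝ}

lemma eq_mul_pow_div_factorial_of_succ_mul_eq (h : ∀ k : ℕ, ((k : ℝ) + 1) * p (k + 1) = lam * p k)
    (k : ℕ) : p k = p 0 * (lam ^ k / k.factorial) := by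
  induction k with
  | zero => simp
  | succ n ih =>
    have hn : ((n : ℝ) + 1) ≠ 0 := by positivity
    have hstep : p (n + 1) = lam * p n / (n + 1) := by rw [eq_div_iff hn, mul_comm, h n]
    rw [hstep, ih, Nat.factorial_succ, pow_succ]
    push_cast
    field_simp

lemma eq_poissonWeight_of_succ_mul_eq (h : ∀ k : ℕ, ((k : ℝ) + 1) * p (k + 1) = lam * p k)
    (hp : ∑' k, p k = 1) : p = poissonWeight lam := by
  have hform := eq_mul_pow_div_factorial_of_succ_mul_eq h
  have hp0 : p 0 * Real.exp lam = 1 := by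
    rw [← hp, Real.exp_eq_exp_ℝ, ← (NormedSpace.expSeries_div_hasSum_exp lam).tsum_eq,
      ← tsum_mul_left]
    exact tsum_congr fun k => (hform k).symm
  funext k
  rw [hform k, poissonWeight, Real.exp_neg, ← eq_inv_of_mul_eq_one_left hp0]
  ring

end Recurrence

section NatValued

variable {Ω : Type*} [MeasurableSpace Ω] {μ : Measure Ω} {Z : Ω → ℕ}

lemma integral_comp_eq_tsum_s1 (hZ : Measurable Z) {g : ℕ → ℝ}
    (hg : Integrable (fun ω => g (Z ω)) μ) :
    ∫ ω, g (Z ω) ∂μ = ∑' k, (μ {ω | Z ω = k}).toReal * g k := by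
  have hmeas : Measurable g := measurable_from_top
  rw [← integral_map hZ.aemeasurable hmeas.aestronglyMeasurable, integral_countable
    ((integrable_map_measure hmeas.aestronglyMeasurable hZ.aemeasurable).mpr hg)]
  refine tsum_congr fun k => ?_
  rw [measureReal_def, Measure.map_apply hZ (measurableSet_singleton k), smul_eq_mul]
  rfl

lemma integrable_comp_of_bounded [IsFiniteMeasure μ] (hZ : Measurable Z) {f : ℕ → ℝ} {C : ℝ}
    (hC : ∀ k, |f k| ≤ C) : Integrable (fun ω => f (Z ω)) μ :=
  .of_bound (measurable_from_top.comp hZ).aestronglyMeasurable C (.of_forall fun ω => hC (Z ω))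

lemma integrable_mul_comp_of_bounded (hZ : Measurable Z)
    (hZint : Integrable (fun ω => (Z ω : ℝ)) μ) {f : ℕ → ℝ} {C : ℝ} (hC : ∀ k, |f k| ≤ C) :
    Integrable (fun ω => (Z ω : ℝ) * f (Z ω)) μ :=
  hZint.mul_bdd (measurable_from_top.comp hZ).aestronglyMeasurable (.of_forall fun ω => hC (Z ω))

lemma integral_mul_comp_eq_iff_tsum_eq [IsFiniteMeasure μ] (hZ : Measurable Z)
    (hZint : Integrable (fun ω => (Z ω : ℝ)) μ) {f : ℕ → ℝ} {C : ℝ} (hC : ∀ k, |f k| ≤ C)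
    (lam : ℝ) :
    ∫ ω, (Z ω : ℝ) * f (Z ω) ∂μ = lam * ∫ ω, f (Z ω + 1) ∂μ ↔
      ∑' k, (μ {ω | Z ω = k}).toReal * (k * f k)
        = lam * ∑' k, (μ {ω | Z ω = k}).toReal * f (k + 1) := by
  rw [integral_comp_eq_tsum_s1 (g := fun k => k * f k) hZ
      (integrable_mul_comp_of_bounded hZ hZint hC),
    integral_comp_eq_tsum_s1 (g := fun k => f (k + 1)) hZ
      (integrable_comp_of_bounded hZ fun k => hC (k + 1))]

end NatValued

theorem poisson_characterization_general {Ω : Type*} [MeasurableSpace Ω] (μ : Measure Ω)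
    [IsProbabilityMeasure μ] (Z : Ω → ℕ) (hZ : Measurable Z)
    (hZint : Integrable (fun ω => (Z ω : ℝ)) μ) (lam : ℝ) :
    (∀ k : ℕ, (μ {ω | Z ω = k}).toReal
        = Real.exp (-lam) * lam ^ k / (k.factorial : ℝ)) ↔
      ∀ f : ℕ → ℝ, (∃ C : ℝ, ∀ x : ℕ, |f x| ≤ C) →
        ∫ ω, (Z ω : ℝ) * f (Z ω) ∂μ = lam * ∫ ω, f (Z ω + 1) ∂μ := by
  constructor
  · rintro hP f ⟨C, hC⟩
    rw [integral_mul_comp_eq_iff_tsum_eq hZ hZint hC]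
    simp only [hP]
    exact tsum_poissonWeight_mul_nat_mul lam (summable_poissonWeight_mul_nat_mul lam hC)
  · intro hE
    have hmass : ∑' k, (μ {ω | Z ω = k}).toReal = 1 := by
      simpa using (integral_comp_eq_tsum_s1 (μ := μ) (g := fun _ => 1) hZ (integrable_const 1)).symm
    have hrec (k : ℕ) : ((k : ℝ) + 1) * (μ {ω | Z ω = k + 1}).toReal
        = lam * (μ {ω | Z ω = k}).toReal := by
      have hind (x : ℕ) : |if x = k + 1 then (1 : ℝ) else 0| ≤ 1 := by split_ifs <;> simp
      simpa [mul_comm] using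
        (integral_mul_comp_eq_iff_tsum_eq hZ hZint hind lam).mp (hE _ ⟨1, hind⟩)
    exact congrFun (eq_poissonWeight_of_succ_mul_eq hrec hmass)

/-- Chen's characterization: an `ℕ`-valued integrable random variable `Z` is Poisson
distributed with parameter `λ > 0` if and only if `E[Z·f(Z)] = λ·E[f(Z+1)]` for every
bounded function `f : ℕ → ℝ`. -/
theorem poisson_characterization {Ω : Type*} [MeasurableSpace Ω] (μ : Measure Ω)
    [IsProbabilityMeasure μ] (Z : Ω → ℕ) (hZ : Measurable Z)
    (hZint : Integrable (fun ω => (Z ω : ℝ)) μ) (lam : ℝ) (hlam : 0 < lam) :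
    (∀ k : ℕ, (μ {ω | Z ω = k}).toReal
        = Real.exp (-lam) * lam ^ k / (k.factorial : ℝ)) ↔
      ∀ f : ℕ → ℝ, (∃ C : ℝ, ∀ x : ℕ, |f x| ≤ C) →
        ∫ ω, (Z ω : ℝ) * f (Z ω) ∂μ = lam * ∫ ω, f (Z ω + 1) ∂μ :=
  poisson_characterization_general μ Z hZ hZint lam
end

section
/- Let λ > 0 and let h : ℕ → ℝ satisfy Σ_{i≥0} λ^i |h(i)| / i! < ∞. Define f_h(x) = ((x-1)!/λ^x) · Σ_{i=x}^∞ (λ^i/i!)·(h(i) − P_λ(h)) for x ≥ 1, where P_λ(h) = e^{-λ} Σ_{i≥0} λ^i h(i)/i!. Then for every x ∈ ℕ with x ≥ 1 (and for x = 0 with f_h(0) arbitrary, using the equation at x = 0 directly), f_h satisfies Stein's equation: x·f_h(x) − λ·f_h(x+1) = h(x) − P_λ(h) for all x ≥ 1. -/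
/-!
Write `F(i) = λ^i (h(i) − P_λ(h)) / i!` and `T(x) = Σ_{i ≥ x} F(i)`, so that
`f_h(x) = (x−1)!/λ^x · T(x)`. Then `x f_h(x)` and `λ f_h(x+1)` carry the same prefactor `x!/λ^x`,
and their difference is `x!/λ^x · (T(x) − T(x+1)) = x!/λ^x · F(x) = h(x) − P_λ(h)`.
-/

noncomputable section

/-- Poisson-`λ` expectation of `h`: `P_λ(h) = e^{-λ} Σ_{i≥0} λ^i h(i)/i!`. -/
def poissonExp (lam : ℝ) (h : ℕ → ℝ) : ℝ :=
  Real.exp (-lam) * ∑' i : ℕ, lam ^ i * h i / (i.factorial : ℝ)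

/-- The Stein solution `f_h(x) = ((x−1)!/λ^x)·Σ_{i=x}^∞ (λ^i/i!)(h(i) − P_λ(h))`
(written with the shifted index `i = x + j`). -/
def steinSol (lam : ℝ) (h : ℕ → ℝ) (x : ℕ) : ℝ :=
  ((x - 1).factorial : ℝ) / lam ^ x *
    ∑' j : ℕ, lam ^ (x + j) * (h (x + j) - poissonExp lam h) / ((x + j).factorial : ℝ)

open Nat

theorem Summable.tsum_add_left_eq_add_tsum {G : Type*} [AddCommGroup G] [TopologicalSpace G]
    [IsTopologicalAddGroup G] [T2Space G] {f : ℕ → G} (hf : Summable f) (x : ℕ) :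
    ∑' j, f (x + j) = f x + ∑' j, f (x + 1 + j) := by
  have hshift : Summable fun j => f (x + j) := by
    simpa only [add_comm x] using (summable_nat_add_iff x).mpr hf
  rw [hshift.tsum_eq_zero_add]
  simp only [add_zero, ← add_assoc, add_right_comm x _ 1]

def steinTerm (lam : ℝ) (h : ℕ → ℝ) (i : ℕ) : ℝ :=
  lam ^ i * (h i - poissonExp lam h) / i !

theorem steinSol_eq_mul_tsum_steinTerm (lam : ℝ) (h : ℕ → ℝ) (x : ℕ) :
    steinSol lam h x = (x - 1)! / lam ^ x * ∑' j, steinTerm lam h (x + j) :=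
  rfl

theorem summable_steinTerm {lam : ℝ} (hlam : 0 ≤ lam) {h : ℕ → ℝ}
    (hsum : Summable fun i => lam ^ i * |h i| / i !) : Summable (steinTerm lam h) := by
  have hsum_h : Summable fun i => lam ^ i * h i / i ! :=
    hsum.of_norm_bounded fun i => by
      rw [Real.norm_eq_abs, abs_div, abs_mul, abs_of_nonneg (pow_nonneg hlam i), Nat.abs_cast]
  refine (hsum_h.sub ((Real.summable_pow_div_factorial lam).mul_right (poissonExp lam h))).congr
    fun i => ?_
  simp only [steinTerm]
  ring

theorem factorial_div_pow_mul_steinTerm {lam : ℝ} (hlam : lam ≠ 0) (h : ℕ → ℝ) (x : ℕ) :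
    x ! / lam ^ x * steinTerm lam h x = h x - poissonExp lam h := by
  have : (x ! : ℝ) ≠ 0 := mod_cast x.factorial_ne_zero
  simp only [steinTerm]
  field_simp

theorem mul_factorial_pred_div_pow {x : ℕ} (hx : 1 ≤ x) (lam : ℝ) :
    x * ((x - 1)! / lam ^ x) = (x ! : ℝ) / lam ^ x := by
  obtain ⟨y, rfl⟩ := Nat.exists_eq_add_of_le' hx
  rw [Nat.add_sub_cancel, Nat.factorial_succ, Nat.cast_mul, mul_div_assoc]

theorem mul_factorial_div_pow_succ {lam : ℝ} (hlam : lam ≠ 0) (x : ℕ) :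
    lam * ((x + 1 - 1)! / lam ^ (x + 1)) = (x ! : ℝ) / lam ^ x := by
  rw [Nat.add_sub_cancel, pow_succ]
  field_simp

/-- `f_h` satisfies Stein's equation `x·f_h(x) − λ·f_h(x+1) = h(x) − P_λ(h)` for `x ≥ 1`. -/
theorem steinSol_solves_stein (lam : ℝ) (hlam : 0 < lam) (h : ℕ → ℝ)
    (hsum : Summable fun i : ℕ => lam ^ i * |h i| / (i.factorial : ℝ)) :
    ∀ x : ℕ, 1 ≤ x →
      (x : ℝ) * steinSol lam h x - lam * steinSol lam h (x + 1) = h x - poissonExp lam h := by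
  intro x hx
  have htail := (summable_steinTerm hlam.le hsum).tsum_add_left_eq_add_tsum x
  rw [steinSol_eq_mul_tsum_steinTerm, steinSol_eq_mul_tsum_steinTerm, ← mul_assoc, ← mul_assoc,
    mul_factorial_pred_div_pow hx, mul_factorial_div_pow_succ hlam.ne', ← mul_sub, htail,
    add_sub_cancel_right, factorial_div_pow_mul_steinTerm hlam.ne']

end
end

section
/- (Discrete reverse Taylor formula) Let X, Y be independent ℕ-valued random variables with sufficient moments, N ∈ ℕ, and f : ℕ → ℝ of polynomial growth. Then E[f(X)] = Σ_{d ≥ 0} (−1)^d Σ_{J ∈ ℕ_*^d, |J| ≤ N} m_Y^{(J)}·E[Δ^{|J|} f(X+Y)] + ε_N(f,X,Y), where ε_N(f,X,Y) := − Σ_{d ≥ 0} (−1)^d Σ_{J ∈ ℕ_*^d, |J| ≤ N} m_Y^{(J)}·δ_{N−|J|}(Δ^{|J|} f, X, Y). -/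
open MeasureTheory ProbabilityTheory

/-- Forward difference operator on functions `ℕ → ℝ`. -/
def fdiff (f : ℕ → ℝ) : ℕ → ℝ := fun x => f (x + 1) - f x

/-- The sum `Σ_{0 ≤ j_1 < ... < j_{M+1} < y} Δ^{M+1} f(x + j_1)`: strictly increasing
`(M+1)`-tuples in `{0,…,y−1}` are identified with `(M+1)`-element subsets of
`Finset.range y`, with `j_1` the least element. -/
noncomputable def tupleSum (f : ℕ → ℝ) (x y M : ℕ) : ℝ :=
  ∑ s ∈ (Finset.range y).powersetCard (M + 1), fdiff^[M + 1] f (x + s.min.untopD 0)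

/-- The index set `{J ∈ ℕ_*^d : |J| ≤ N}` of `d`-tuples of positive integers with
`|J| = j_1 + ⋯ + j_d ≤ N` (each coordinate then automatically lies in `[1, N]`). -/
def indexSet (d N : ℕ) : Finset (Fin d → ℕ) :=
  (Fintype.piFinset fun _ => Finset.Icc 1 N).filter fun J => ∑ l, J l ≤ N

/-!
Apply the discrete Taylor formula at `X` with increment `Y` to `Δ^k f`, to order `N - k`, for every
`k ≤ N`. Taking expectations, and factoring `E[C(Y, j) Δ^{k+j} f(X)] = m_Y^{(j)} E[Δ^{k+j} f(X)]`
by independence, gives the unitriangular system `a_k + Σ_{1 ≤ j ≤ N-k} m_Y^{(j)} a_{k+j} = c_k`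
for `a_k = E[Δ^k f(X)]` and `c_k = E[Δ^k f(X+Y)] - δ_{N-k}(Δ^k f, X, Y)`. Substituting repeatedly
into `a_0 = c_0 - Σ_j m_Y^{(j)} a_j` expresses `a_0` as the alternating sum over compositions `J`
with `|J| ≤ N`. The same system, read by descending induction on `k`, shows that each
`Δ^k f(X)` is integrable.
-/

open Finset

section Compositions

variable {R : Type*} [CommRing R]

lemma mem_indexSet {d B : ℕ} {J : Fin d → ℕ} :
    J ∈ indexSet d B ↔ (∀ l, 1 ≤ J l) ∧ ∑ l, J l ≤ B := by
  simp only [indexSet, mem_filter, Fintype.mem_piFinset, mem_Icc]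
  refine ⟨fun ⟨hJ, hsum⟩ => ⟨fun l => (hJ l).1, hsum⟩,
    fun ⟨hJ, hsum⟩ => ⟨fun l => ⟨hJ l, ?_⟩, hsum⟩⟩
  exact (single_le_sum (fun i _ => Nat.zero_le (J i)) (mem_univ l)).trans hsum

lemma indexSet_eq_empty {d B : ℕ} (h : B < d) : indexSet d B = ∅ := by
  refine eq_empty_of_forall_notMem fun J hJ => ?_
  have hd : d ≤ ∑ l, J l := by
    simpa using card_nsmul_le_sum univ J 1 fun l _ => (mem_indexSet.mp hJ).1 l
  exact absurd (hd.trans (mem_indexSet.mp hJ).2) (by omega)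

lemma cons_mem_indexSet {d B j : ℕ} {J : Fin d → ℕ} :
    (Fin.cons j J : Fin (d + 1) → ℕ) ∈ indexSet (d + 1) B ↔
      j ∈ Icc 1 B ∧ J ∈ indexSet d (B - j) := by
  simp only [mem_indexSet, Fin.forall_fin_succ, Fin.cons_zero, Fin.cons_succ, Fin.sum_cons,
    mem_Icc]
  exact ⟨fun ⟨⟨h1, hJ⟩, hs⟩ => ⟨⟨h1, by omega⟩, hJ, by omega⟩,
    fun ⟨⟨h1, _⟩, hJ, hs⟩ => ⟨⟨h1, hJ⟩, by omega⟩⟩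

lemma sum_indexSet_succ {M : Type*} [AddCommMonoid M] (d B : ℕ) (F : (Fin (d + 1) → ℕ) → M) :
    ∑ J ∈ indexSet (d + 1) B, F J = ∑ j ∈ Icc 1 B, ∑ J ∈ indexSet d (B - j), F (Fin.cons j J) := by
  rw [sum_sigma']
  refine sum_nbij' (fun J => ⟨J 0, Fin.tail J⟩) (fun p => Fin.cons p.1 p.2) ?_ ?_ ?_ ?_ ?_
  · intro J hJ
    rw [← Fin.cons_self_tail J, cons_mem_indexSet] at hJ
    simpa using hJ
  · rintro ⟨j, J⟩ hJ
    simpa [cons_mem_indexSet] using hJ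
  all_goals simp

def compositionTerm (m c : ℕ → R) (d B : ℕ) : R :=
  ∑ J ∈ indexSet d B, (∏ l, m (J l)) * c (∑ l, J l)

def compositionSum (m c : ℕ → R) (B : ℕ) : R :=
  ∑ d ∈ range (B + 1), (-1) ^ d * compositionTerm m c d B

lemma compositionTerm_zero (m c : ℕ → R) (B : ℕ) : compositionTerm m c 0 B = c 0 := by
  have : indexSet 0 B = univ := eq_univ_of_forall fun J => mem_indexSet.mpr (by simp)
  simp [compositionTerm, this]

lemma compositionTerm_succ (m c : ℕ → R) (d B : ℕ) :
    compositionTerm m c (d + 1) B =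
      ∑ j ∈ Icc 1 B, m j * compositionTerm m (fun t => c (j + t)) d (B - j) := by
  simp only [compositionTerm, sum_indexSet_succ, mul_sum, Fin.prod_univ_succ, Fin.sum_cons,
    Fin.cons_zero, Fin.cons_succ, mul_assoc]

lemma compositionTerm_eq_zero (m c : ℕ → R) {d B : ℕ} (h : B < d) :
    compositionTerm m c d B = 0 := by
  simp [compositionTerm, indexSet_eq_empty h]

lemma compositionSum_eq_sum_range (m c : ℕ → R) {B n : ℕ} (h : B < n) :
    compositionSum m c B = ∑ d ∈ range n, (-1) ^ d * compositionTerm m c d B := by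
  refine sum_subset (range_subset_range.mpr h) fun d _ hd => ?_
  rw [compositionTerm_eq_zero m c (by simpa using hd), mul_zero]

lemma compositionSum_eq_sub_sum (m c : ℕ → R) (B : ℕ) :
    compositionSum m c B =
      c 0 - ∑ j ∈ Icc 1 B, m j * compositionSum m (fun t => c (j + t)) (B - j) := by
  have hshift : ∀ j ∈ Icc 1 B, compositionSum m (fun t => c (j + t)) (B - j) =
      ∑ d ∈ range B, (-1) ^ d * compositionTerm m (fun t => c (j + t)) d (B - j) := by
    intro j hj
    rw [mem_Icc] at hj
    exact compositionSum_eq_sum_range m _ (by omega)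
  rw [sum_congr rfl fun j hj => by rw [hshift j hj], compositionSum, sum_range_succ',
    compositionTerm_zero]
  simp only [compositionTerm_succ, pow_succ, pow_zero, one_mul, mul_neg_one, neg_mul, mul_sum,
    sum_neg_distrib, sum_comm (s := range B), mul_left_comm (m _)]
  abel

lemma compositionSum_sub (m c c' : ℕ → R) (B : ℕ) :
    compositionSum m (fun t => c t - c' t) B = compositionSum m c B - compositionSum m c' B := by
  simp only [compositionSum, compositionTerm, mul_sub, sum_sub_distrib]

theorem eq_compositionSum_of_forall_add_sum_eq (m a c : ℕ → R) (B : ℕ)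
    (h : ∀ k ≤ B, a k + ∑ j ∈ Icc 1 (B - k), m j * a (k + j) = c k) :
    a 0 = compositionSum m c B := by
  induction B using Nat.strong_induction_on generalizing a c with
  | _ B ih =>
  have hshift : ∀ j ∈ Icc 1 B, a j = compositionSum m (fun t => c (j + t)) (B - j) := by
    intro j hj
    rw [mem_Icc] at hj
    refine ih (B - j) (by omega) (fun t => a (j + t)) _ fun k hk => ?_
    simpa [add_assoc, show B - (j + k) = B - j - k by omega] using h (j + k) (by omega)
  rw [compositionSum_eq_sub_sum, ← sum_congr rfl fun j hj => by rw [← hshift j hj],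
    ← h 0 (Nat.zero_le B)]
  simp

end Compositions

lemma untopD_min_eq_iff {α : Type*} [LinearOrder α] {s : Finset α} (hs : s.Nonempty)
    {d m : α} : s.min.untopD d = m ↔ m ∈ s ∧ ∀ a ∈ s, m ≤ a := by
  rw [← coe_min' hs, WithTop.untopD_coe, min'_eq_iff]

lemma lt_untopD_min_iff {α : Type*} [LinearOrder α] {s : Finset α} (hs : s.Nonempty)
    {d i : α} : i < s.min.untopD d ↔ ∀ a ∈ s, i < a := by
  rw [← coe_min' hs, WithTop.untopD_coe, lt_min'_iff]

/-- Inserting a new minimum below an `(n+1)`-subset of `range y` produces each `(n+2)`-subset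
exactly once. -/
lemma sum_powersetCard_succ_untopD_min {M : Type*} [AddCommMonoid M] (φ : ℕ → M) (y n : ℕ) :
    ∑ t ∈ (range y).powersetCard (n + 2), φ (t.min.untopD 0) =
      ∑ s ∈ (range y).powersetCard (n + 1), ∑ i ∈ range (s.min.untopD 0), φ i := by
  have hne : ∀ {s : Finset ℕ} {k : ℕ}, s.card = k + 1 → s.Nonempty := fun h =>
    card_pos.mp (by omega)
  rw [sum_sigma']
  refine sum_nbij' (fun t => ⟨t.erase (t.min.untopD 0), t.min.untopD 0⟩)
    (fun p => insert p.2 p.1) ?_ ?_ ?_ ?_ fun _ _ => rfl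
  · intro t ht
    rw [mem_powersetCard] at ht
    have hmin := (untopD_min_eq_iff (d := 0) (hne ht.2)).mp rfl
    have hcard : (t.erase (t.min.untopD 0)).card = n + 1 := by
      rw [card_erase_of_mem hmin.1, ht.2]; rfl
    simp only [mem_sigma, mem_powersetCard, mem_range, lt_untopD_min_iff (hne hcard)]
    exact ⟨⟨(erase_subset _ _).trans ht.1, hcard⟩,
      fun a ha => lt_of_le_of_ne (hmin.2 a (mem_of_mem_erase ha)) (ne_of_mem_erase ha).symm⟩
  · rintro ⟨s, i⟩ hp
    simp only [mem_sigma, mem_powersetCard, mem_range] at hp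
    obtain ⟨⟨hsub, hcard⟩, hi⟩ := hp
    rw [lt_untopD_min_iff (hne hcard)] at hi
    obtain ⟨a, ha⟩ := hne hcard
    refine mem_powersetCard.mpr ⟨insert_subset (mem_range.mpr ?_) hsub, ?_⟩
    · exact (hi a ha).trans (mem_range.mp (hsub ha))
    · rw [card_insert_of_notMem fun his => (hi i his).false, hcard]
  · intro t ht
    rw [mem_powersetCard] at ht
    exact insert_erase ((untopD_min_eq_iff (d := 0) (hne ht.2)).mp rfl).1
  · rintro ⟨s, i⟩ hp
    simp only [mem_sigma, mem_powersetCard, mem_range] at hp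
    obtain ⟨⟨-, hcard⟩, hi⟩ := hp
    rw [lt_untopD_min_iff (hne hcard)] at hi
    have hmin : (insert i s).min.untopD 0 = i := by
      refine (untopD_min_eq_iff (insert_nonempty i s)).mpr ⟨mem_insert_self i s, fun a ha => ?_⟩
      rcases mem_insert.mp ha with rfl | ha
      exacts [le_rfl, (hi a ha).le]
    simp only [hmin, erase_insert fun his => (hi i his).false]

lemma add_eq_add_sum_fdiff (g : ℕ → ℝ) (x j : ℕ) :
    g (x + j) = g x + ∑ i ∈ range j, fdiff g (x + i) := by
  have h := sum_range_sub (fun i => g (x + i)) j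
  simp only [add_zero, ← add_assoc] at h
  simp only [fdiff, h]
  ring

lemma tupleSum_eq_choose_mul_add_succ (f : ℕ → ℝ) (x y P : ℕ) :
    tupleSum f x y P = (y.choose (P + 1) : ℝ) * fdiff^[P + 1] f x + tupleSum f x y (P + 1) := by
  simp only [tupleSum, add_eq_add_sum_fdiff (fdiff^[P + 1] f) x,
    ← Function.iterate_succ_apply' fdiff, sum_add_distrib, sum_const, card_powersetCard,
    card_range, nsmul_eq_mul]
  rw [← sum_powersetCard_succ_untopD_min (fun i => fdiff^[P + 2] f (x + i))]

lemma tupleSum_zero (f : ℕ → ℝ) (x y : ℕ) : tupleSum f x y 0 = f (x + y) - f x := by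
  simp only [tupleSum, powersetCard_one, sum_map, Function.Embedding.coeFn_mk, min_singleton,
    WithTop.untopD_coe, zero_add, Function.iterate_one, add_eq_add_sum_fdiff f x y]
  ring

theorem discrete_taylor (f : ℕ → ℝ) (x y P : ℕ) :
    f (x + y) = f x + ∑ j ∈ Icc 1 P, (y.choose j : ℝ) * fdiff^[j] f x + tupleSum f x y P := by
  induction P with
  | zero => simp [tupleSum_zero]
  | succ P ih => rw [sum_Icc_succ_top (by omega), ih, tupleSum_eq_choose_mul_add_succ]; ring

section Independence

variable {Ω : Type*} [MeasurableSpace Ω] {μ : Measure Ω} {X Y : Ω → ℕ} {N : ℕ} {f : ℕ → ℝ}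

lemma discrete_taylor_fdiff_iterate (f : ℕ → ℝ) (k P x y : ℕ) :
    fdiff^[k] f (x + y) = fdiff^[k] f x + ∑ j ∈ Icc 1 P, (y.choose j : ℝ) * fdiff^[k + j] f x
      + tupleSum (fdiff^[k] f) x y P := by
  simp only [discrete_taylor (fdiff^[k] f) x y P, add_comm k, Function.iterate_add_apply]

lemma indepFun_choose_fdiff_iterate (hindep : IndepFun X Y μ) (f : ℕ → ℝ) (j i : ℕ) :
    IndepFun (fun ω => ((Y ω).choose j : ℝ)) (fun ω => fdiff^[i] f (X ω)) μ :=
  hindep.symm.comp (φ := fun n : ℕ => ((n.choose j : ℕ) : ℝ)) (ψ := fdiff^[i] f)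
    measurable_from_nat measurable_from_nat

lemma integrable_fdiff_iterate_comp (hindep : IndepFun X Y μ)
    (hfXY : ∀ k ≤ N, Integrable (fun ω => fdiff^[k] f (X ω + Y ω)) μ)
    (hmom : ∀ k ≤ N, Integrable (fun ω => ((Y ω).choose k : ℝ)) μ)
    (hrem : ∀ k ≤ N, Integrable (fun ω => tupleSum (fdiff^[k] f) (X ω) (Y ω) (N - k)) μ) :
    ∀ k ≤ N, Integrable (fun ω => fdiff^[k] f (X ω)) μ := by
  intro k
  induction k using Nat.strong_decreasing_induction with
  | base => exact ⟨N, fun m hm hmN => absurd hmN (by omega)⟩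
  | step k ih =>
    intro hk
    have hsum : Integrable (fun ω =>
        ∑ j ∈ Icc 1 (N - k), ((Y ω).choose j : ℝ) * fdiff^[k + j] f (X ω)) μ := by
      refine integrable_finsetSum _ fun j hj => ?_
      rw [mem_Icc] at hj
      exact (indepFun_choose_fdiff_iterate hindep f j (k + j)).integrable_mul
        (hmom j (by omega)) (ih (k + j) (by omega) (by omega))
    refine (((hfXY k hk).sub hsum).sub (hrem k hk)).congr (ae_of_all _ fun ω => ?_)
    simp only [Pi.sub_apply, discrete_taylor_fdiff_iterate f k (N - k) (X ω) (Y ω)]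
    ring

lemma integral_fdiff_iterate_add_sum (hindep : IndepFun X Y μ)
    (hfXY : ∀ k ≤ N, Integrable (fun ω => fdiff^[k] f (X ω + Y ω)) μ)
    (hmom : ∀ k ≤ N, Integrable (fun ω => ((Y ω).choose k : ℝ)) μ)
    (hrem : ∀ k ≤ N, Integrable (fun ω => tupleSum (fdiff^[k] f) (X ω) (Y ω) (N - k)) μ)
    {k : ℕ} (hk : k ≤ N) :
    ∫ ω, fdiff^[k] f (X ω) ∂μ + ∑ j ∈ Icc 1 (N - k),
        (∫ ω, ((Y ω).choose j : ℝ) ∂μ) * ∫ ω, fdiff^[k + j] f (X ω) ∂μ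
      = ∫ ω, fdiff^[k] f (X ω + Y ω) ∂μ
        - ∫ ω, tupleSum (fdiff^[k] f) (X ω) (Y ω) (N - k) ∂μ := by
  have hX := integrable_fdiff_iterate_comp hindep hfXY hmom hrem
  have hind := fun j => indepFun_choose_fdiff_iterate hindep f j (k + j)
  have hprod : ∀ j ∈ Icc 1 (N - k),
      Integrable (fun ω => ((Y ω).choose j : ℝ) * fdiff^[k + j] f (X ω)) μ := fun j hj => by
    rw [mem_Icc] at hj
    exact (hind j).integrable_mul (hmom j (by omega)) (hX (k + j) (by omega))
  have hsum : Integrable (fun ω => fdiff^[k] f (X ω)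
      + ∑ j ∈ Icc 1 (N - k), ((Y ω).choose j : ℝ) * fdiff^[k + j] f (X ω)) μ :=
    (hX k hk).add (integrable_finsetSum _ hprod)
  simp only [discrete_taylor_fdiff_iterate f k (N - k)]
  rw [integral_add hsum (hrem k hk), integral_add (hX k hk) (integrable_finsetSum _ hprod),
    integral_finsetSum _ hprod,
    sum_congr rfl fun j hj => (hind j).integral_fun_mul_eq_mul_integral
      (hmom j (by grind)).1 (hX (k + j) (by grind)).1]
  ring

end Independence

theorem discrete_reverse_taylor_general {Ω : Type*} [MeasurableSpace Ω] (μ : Measure Ω)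
    (X Y : Ω → ℕ) (hindep : IndepFun X Y μ) (N : ℕ) (f : ℕ → ℝ)
    (hfXY : ∀ k ≤ N, Integrable (fun ω => fdiff^[k] f (X ω + Y ω)) μ)
    (hmom : ∀ k ≤ N + 1, Integrable (fun ω => ((Y ω).choose k : ℝ)) μ)
    (hrem : ∀ k ≤ N, Integrable (fun ω => tupleSum (fdiff^[k] f) (X ω) (Y ω) (N - k)) μ) :
    ∫ ω, f (X ω) ∂μ
      = ∑ d ∈ Finset.range (N + 1), (-1 : ℝ) ^ d *
          ∑ J ∈ indexSet d N,
            (∏ l, ∫ ω, ((Y ω).choose (J l) : ℝ) ∂μ) *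
              ∫ ω, fdiff^[∑ l, J l] f (X ω + Y ω) ∂μ
        + -(∑ d ∈ Finset.range (N + 1), (-1 : ℝ) ^ d *
            ∑ J ∈ indexSet d N,
              (∏ l, ∫ ω, ((Y ω).choose (J l) : ℝ) ∂μ) *
                ∫ ω, tupleSum (fdiff^[∑ l, J l] f) (X ω) (Y ω) (N - ∑ l, J l) ∂μ) := by
  have hrec := fun k (hk : k ≤ N) =>
    integral_fdiff_iterate_add_sum hindep hfXY (fun j hj => hmom j (by omega)) hrem hk
  rw [← sub_eq_add_neg]
  exact (eq_compositionSum_of_forall_add_sum_eq _ (fun k => ∫ ω, fdiff^[k] f (X ω) ∂μ) _ N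
    hrec).trans (compositionSum_sub _ _ _ N)

/-- Discrete reverse Taylor formula: for independent `ℕ`-valued `X, Y`,
`E[f(X)] = Σ_{d≥0} (−1)^d Σ_{J ∈ ℕ_*^d, |J| ≤ N} m_Y^{(J)}·E[Δ^{|J|} f(X+Y)] + ε_N(f,X,Y)`
where `ε_N(f,X,Y) = − Σ_{d≥0} (−1)^d Σ_{J} m_Y^{(J)}·δ_{N−|J|}(Δ^{|J|} f, X, Y)`,
`m_Y^{(J)} = Π_l E[C(Y, j_l)]`, and `δ_M(g,X,Y) = E[Σ_{0 ≤ j_1<…<j_{M+1}<Y} Δ^{M+1} g(X+j_1)]`.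
The sum over `d ≥ 0` is finite since the index set is empty for `d > N`. -/
theorem discrete_reverse_taylor {Ω : Type*} [MeasurableSpace Ω] (μ : Measure Ω)
    [IsProbabilityMeasure μ] (X Y : Ω → ℕ) (hX : Measurable X) (hY : Measurable Y)
    (hindep : IndepFun X Y μ) (N : ℕ) (f : ℕ → ℝ)
    (hfX : Integrable (fun ω => f (X ω)) μ)
    (hfXY : ∀ k ≤ N, Integrable (fun ω => fdiff^[k] f (X ω + Y ω)) μ)
    (hmom : ∀ k ≤ N + 1, Integrable (fun ω => ((Y ω).choose k : ℝ)) μ)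
    (hrem : ∀ k ≤ N, Integrable (fun ω => tupleSum (fdiff^[k] f) (X ω) (Y ω) (N - k)) μ) :
    ∫ ω, f (X ω) ∂μ
      = ∑ d ∈ Finset.range (N + 1), (-1 : ℝ) ^ d *
          ∑ J ∈ indexSet d N,
            (∏ l, ∫ ω, ((Y ω).choose (J l) : ℝ) ∂μ) *
              ∫ ω, fdiff^[∑ l, J l] f (X ω + Y ω) ∂μ
        + -(∑ d ∈ Finset.range (N + 1), (-1 : ℝ) ^ d *
            ∑ J ∈ indexSet d N,
              (∏ l, ∫ ω, ((Y ω).choose (J l) : ℝ) ∂μ) *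
                ∫ ω, tupleSum (fdiff^[∑ l, J l] f) (X ω) (Y ω) (N - ∑ l, J l) ∂μ) :=
  discrete_reverse_taylor_general μ X Y hindep N f hfXY hmom hrem
end

section
/- Let λ > 0 and h ∈ E_λ. Define f̃_h(x) = ((x−1)!/λ^x)·Σ_{i=x}^∞ (λ^i/i!)·h(i) for x ∈ ℕ_*. Then f̃_h ∈ E_λ, i.e., Σ_{a ≥ 1} (λ^a/a!)·|P(a)·f̃_h(a)| < ∞ for every polynomial P. -/
/-- `h ∈ E_λ` : for every polynomial `P`, `Σ_{i ≥ 1} (λ^i/i!)·|h(i)·P(i)| < ∞`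
(the sum over `i ≥ 1` is written with the shifted index `i = j + 1`). -/
def memE (lam : ℝ) (h : ℕ → ℝ) : Prop :=
  ∀ P : Polynomial ℝ,
    Summable fun j : ℕ =>
      lam ^ (j + 1) / ((j + 1).factorial : ℝ) * |h (j + 1) * P.eval ((j : ℝ) + 1)|

/-- `f̃_h(x) = ((x−1)!/λ^x)·Σ_{i=x}^∞ (λ^i/i!)·h(i)` (shifted index `i = x + j`). -/
noncomputable def ftilde (lam : ℝ) (h : ℕ → ℝ) (x : ℕ) : ℝ :=
  ((x - 1).factorial : ℝ) / lam ^ x * ∑' j : ℕ, lam ^ (x + j) * h (x + j) / ((x + j).factorial : ℝ)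

/-!
Write `a i = λ^i |h i| / i!`. Then `(λ^x / x!) |f̃_h x| ≤ (1/x) ∑_{i ≥ x} a i`. Since `h ∈ E_λ`,
every moment `∑ a i * i^n` is finite, so by Markov's inequality the tail `∑_{i ≥ x} a i` is
`O(x^{-n})`. With `n = deg P + 1` and `|P x| = O(x^{deg P})` this makes
`(λ^x / x!) |P x · f̃_h x| = O(x^{-2})`.
-/

theorem abs_tsum_le_tsum_abs {ι : Type*} (f : ι → ℝ) : |∑' i, f i| ≤ ∑' i, |f i| := by
  by_cases hf : Summable fun i => |f i|
  · simpa only [Real.norm_eq_abs] using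
      norm_tsum_le_tsum_norm (f := f) (by simpa only [Real.norm_eq_abs])
  · rw [tsum_eq_zero_of_not_summable hf,
      tsum_eq_zero_of_not_summable (mt summable_abs_iff.mpr hf), abs_zero]

theorem Polynomial.abs_eval_le_of_one_le (P : Polynomial ℝ) {x : ℝ} (hx : 1 ≤ x) :
    |P.eval x| ≤ (∑ n ∈ Finset.range (P.natDegree + 1), |P.coeff n|) * x ^ P.natDegree := by
  rw [Polynomial.eval_eq_sum_range, Finset.sum_mul]
  refine (Finset.abs_sum_le_sum_abs _ _).trans (Finset.sum_le_sum fun n hn => ?_)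
  rw [abs_mul, abs_pow, abs_of_nonneg (by linarith : 0 ≤ x)]
  exact mul_le_mul_of_nonneg_left
    (pow_le_pow_right₀ hx (Nat.lt_succ_iff.mp (Finset.mem_range.mp hn))) (abs_nonneg _)

theorem tsum_nat_add_le_div_pow {a : ℕ → ℝ} (ha : ∀ i, 0 ≤ a i) {n : ℕ}
    (hs : Summable fun i => a i * (i : ℝ) ^ n) {x : ℕ} (hx : 0 < x) :
    ∑' j, a (x + j) ≤ (∑' i, a i * (i : ℝ) ^ n) / (x : ℝ) ^ n := by
  have hle : ∀ j, a (x + j) * (x : ℝ) ^ n ≤ a (x + j) * ((x + j : ℕ) : ℝ) ^ n := fun j => by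
    have := ha (x + j)
    gcongr
    exact_mod_cast x.le_add_right j
  have hs_tail : Summable fun j => a (x + j) * ((x + j : ℕ) : ℝ) ^ n :=
    hs.comp_injective (add_right_injective x)
  rw [le_div_iff₀ (by positivity), ← tsum_mul_right]
  calc ∑' j, a (x + j) * (x : ℝ) ^ n ≤ ∑' j, a (x + j) * ((x + j : ℕ) : ℝ) ^ n :=
        (hs_tail.of_nonneg_of_le (fun j => mul_nonneg (ha _) (by positivity)) hle).tsum_le_tsum
          hle hs_tail
    _ ≤ ∑' i, a i * (i : ℝ) ^ n :=
        tsum_comp_le_tsum_of_inj hs (fun i => mul_nonneg (ha i) (by positivity))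
          (add_right_injective x)

noncomputable def weightedAbs (lam : ℝ) (h : ℕ → ℝ) (i : ℕ) : ℝ :=
  lam ^ i / (i.factorial : ℝ) * |h i|

theorem weightedAbs_nonneg {lam : ℝ} (hlam : 0 ≤ lam) (h : ℕ → ℝ) (i : ℕ) :
    0 ≤ weightedAbs lam h i := by
  unfold weightedAbs
  positivity

theorem memE.summable_weightedAbs_mul_pow {lam : ℝ} {h : ℕ → ℝ} (hh : memE lam h) (n : ℕ) :
    Summable fun i => weightedAbs lam h i * (i : ℝ) ^ n := by
  refine (summable_nat_add_iff 1).mp ((hh (Polynomial.X ^ n)).congr fun j => ?_)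
  simp only [weightedAbs, Polynomial.eval_pow, Polynomial.eval_X, abs_mul, abs_pow]
  push_cast
  rw [abs_of_nonneg (by positivity : (0 : ℝ) ≤ j + 1)]
  ring

theorem abs_ftilde_le {lam : ℝ} (hlam : 0 ≤ lam) (h : ℕ → ℝ) (x : ℕ) :
    |ftilde lam h x| ≤ ((x - 1).factorial : ℝ) / lam ^ x * ∑' j, weightedAbs lam h (x + j) := by
  rw [ftilde, abs_mul, abs_of_nonneg (by positivity)]
  refine mul_le_mul_of_nonneg_left ((abs_tsum_le_tsum_abs _).trans_eq (tsum_congr fun j => ?_))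
    (by positivity)
  rw [weightedAbs, abs_div, abs_mul, abs_of_nonneg (pow_nonneg hlam _), Nat.abs_cast]
  ring

theorem pow_div_factorial_mul_abs_ftilde_le {lam : ℝ} (hlam : 0 < lam) (h : ℕ → ℝ) (k : ℕ) :
    lam ^ (k + 1) / ((k + 1).factorial : ℝ) * |ftilde lam h (k + 1)| ≤
      (∑' j, weightedAbs lam h (k + 1 + j)) / ((k : ℝ) + 1) := by
  calc lam ^ (k + 1) / ((k + 1).factorial : ℝ) * |ftilde lam h (k + 1)|
      ≤ lam ^ (k + 1) / ((k + 1).factorial : ℝ) *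
          ((k.factorial : ℝ) / lam ^ (k + 1) * ∑' j, weightedAbs lam h (k + 1 + j)) := by
        gcongr
        exact abs_ftilde_le hlam.le h (k + 1)
    _ = (∑' j, weightedAbs lam h (k + 1 + j)) / ((k : ℝ) + 1) := by
        rw [Nat.factorial_succ]
        push_cast
        field_simp

/-- If `h ∈ E_λ` then `f̃_h ∈ E_λ`. -/
theorem memE_ftilde (lam : ℝ) (hlam : 0 < lam) (h : ℕ → ℝ) (hh : memE lam h) :
    memE lam (ftilde lam h) := by
  intro P
  set d := P.natDegree
  set C := ∑ n ∈ Finset.range (d + 1), |P.coeff n|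
  set M := ∑' i, weightedAbs lam h i * (i : ℝ) ^ (d + 1)
  have bound : ∀ k : ℕ, lam ^ (k + 1) / ((k + 1).factorial : ℝ) *
      |ftilde lam h (k + 1) * P.eval ((k : ℝ) + 1)| ≤ C * M * (1 / ((k + 1 : ℕ) : ℝ) ^ 2) := by
    intro k
    have hk : (0 : ℝ) < k + 1 := by positivity
    have htail := tsum_nat_add_le_div_pow (weightedAbs_nonneg hlam.le h)
      (hh.summable_weightedAbs_mul_pow (d + 1)) k.succ_pos
    have hP := P.abs_eval_le_of_one_le (x := (k : ℝ) + 1) (by linarith [k.cast_nonneg (α := ℝ)])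
    push_cast at htail ⊢
    rw [abs_mul, ← mul_assoc]
    calc _ ≤ (∑' j, weightedAbs lam h (k + 1 + j)) / ((k : ℝ) + 1) * (C * ((k : ℝ) + 1) ^ d) :=
          mul_le_mul (pow_div_factorial_mul_abs_ftilde_le hlam h k) hP (abs_nonneg _)
            (div_nonneg (tsum_nonneg fun j => weightedAbs_nonneg hlam.le h _) hk.le)
      _ ≤ M / ((k : ℝ) + 1) ^ (d + 1) / ((k : ℝ) + 1) * (C * ((k : ℝ) + 1) ^ d) := by gcongr
      _ = C * M * (1 / ((k : ℝ) + 1) ^ 2) := by field_simp; ring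
  refine Summable.of_nonneg_of_le (fun k => by positivity) bound (Summable.mul_left _ ?_)
  exact (summable_nat_add_iff 1).mpr (Real.summable_one_div_nat_pow.mpr one_lt_two)
end

section
/- Let λ > 0 and h ∈ E_λ. The function f̃_h(x) = ((x−1)!/λ^x)·Σ_{i=x}^∞ (λ^i/i!)·h(i) satisfies the modified Stein equation x·f̃_h(x) − λ·f̃_h(x+1) = h(x) for all x ∈ ℕ_*. -/
/-! Writing `a n = λ^n h(n) / n!`, which is summable since `h ∈ E_λ` (take `P = 1`), `f̃_h(x)` is
`(x-1)!/λ^x` times the tail `T x = Σ_{j ≥ 0} a (x + j)`. The Stein equation is then just the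
recursion `T x = a x + T (x + 1)` together with `x · (x-1)! = x!`. -/

lemma summable_poisson_weight_of_memE {lam : ℝ} {h : ℕ → ℝ} (hh : memE lam h) :
    Summable fun n : ℕ => lam ^ n * h n / (n.factorial : ℝ) := by
  have habs : Summable fun j : ℕ => lam ^ (j + 1) / ((j + 1).factorial : ℝ) * |h (j + 1)| := by
    simpa only [Polynomial.eval_one, mul_one] using hh 1
  refine (summable_nat_add_iff 1).1 (Summable.of_abs (habs.abs.congr fun j => ?_))
  rw [abs_mul, abs_abs, abs_div, abs_div, abs_mul, Nat.abs_cast]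
  ring

lemma tsum_nat_add_eq_add_tsum_nat_add {G : Type*} [AddCommGroup G] [TopologicalSpace G]
    [IsTopologicalAddGroup G] [T2Space G] {a : ℕ → G} (ha : Summable a) (x : ℕ) :
    ∑' j, a (x + j) = a x + ∑' j, a (x + 1 + j) := by
  have hx : Summable fun j => a (x + j) := by
    simpa only [add_comm x] using (summable_nat_add_iff x).2 ha
  rw [hx.tsum_eq_zero_add]
  simp only [add_zero, add_assoc, add_comm 1]

lemma stein_equation_of_tail_recursion {lam : ℝ} (hlam : lam ≠ 0) (c T : ℝ) (y : ℕ) :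
    ((y + 1 : ℕ) : ℝ) * ((y.factorial : ℝ) / lam ^ (y + 1) *
        (lam ^ (y + 1) * c / ((y + 1).factorial : ℝ) + T)) -
      lam * (((y + 1).factorial : ℝ) / lam ^ (y + 1 + 1) * T) = c := by
  rw [Nat.factorial_succ]
  push_cast
  field_simp
  ring

/-- `f̃_h` satisfies the modified Stein equation `x·f̃_h(x) − λ·f̃_h(x+1) = h(x)` on `ℕ_*`. -/
theorem ftilde_solves_modified_stein (lam : ℝ) (hlam : 0 < lam) (h : ℕ → ℝ)
    (hh : memE lam h) :
    ∀ x : ℕ, 1 ≤ x → (x : ℝ) * ftilde lam h x - lam * ftilde lam h (x + 1) = h x := by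
  intro x hx
  obtain ⟨y, rfl⟩ := Nat.exists_eq_add_of_le' hx
  have htail := tsum_nat_add_eq_add_tsum_nat_add (summable_poisson_weight_of_memE hh) (y + 1)
  simp only [ftilde, Nat.add_sub_cancel, htail]
  exact stein_equation_of_tail_recursion hlam.ne' (h (y + 1)) _ y
end

section
/- Let λ > 0. Every solution f : ℕ_* → ℝ of the equation x·f(x) − λ·f(x+1) = h(x) (x ∈ ℕ_*) is of the form f(x) = f̃_h(x) + C·(x−1)!/λ^x for some constant C ∈ ℝ; consequently, if h ∈ E_λ has polynomial growth, f̃_h is the unique solution with polynomial growth at infinity. -/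
open Filter

open Nat Topology Asymptotics

/-! Multiplying the equation by `λ^x / x!` turns it into the telescoping relation
`u x - u (x + 1) = λ^x h(x) / x!` for `u x = λ^x f(x) / (x-1)!`, so `u` differs by a constant `C`
from the tail sums `Σ_{i ≥ x} λ^i h(i) / i!`, which are `u` for `f = f̃_h`. If `f` grows
polynomially then `u → 0`, because `(x-1)! / λ^x` beats every power of `x`; the tail sums also
tend to `0`, hence `C = 0`. -/

theorem Summable.exists_eq_tsum_nat_add_add_const {G : Type*} [AddCommGroup G]
    [TopologicalSpace G] [IsTopologicalAddGroup G] [T2Space G] {u a : ℕ → G} {m : ℕ}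
    (ha : Summable a) (hu : ∀ n, m ≤ n → u n - u (n + 1) = a n) :
    ∃ C, ∀ n, m ≤ n → u n = ∑' j, a (n + j) + C := by
  refine ⟨u m - ∑' j, a (m + j), fun n hn => ?_⟩
  induction n, hn using Nat.le_induction with
  | base => abel
  | succ n hn ih =>
    have htail : ∑' j, a (n + j) = a n + ∑' j, a (n + 1 + j) := by
      have hs : Summable fun j => a (n + j) := by
        simpa only [add_comm] using (summable_nat_add_iff n).2 ha
      rw [hs.tsum_eq_zero_add]
      simp only [add_zero, add_right_comm n 1, add_assoc]
    calc u (n + 1) = u n - (u n - u (n + 1)) := (sub_sub_cancel _ _).symm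
      _ = _ := by rw [hu n hn, ih, htail]; abel

theorem pow_div_factorial_pred_mul_sub (c : ℝ) (f : ℕ → ℝ) {x : ℕ} (hx : x ≠ 0) :
    c ^ x / (x - 1)! * f x - c ^ (x + 1) / x ! * f (x + 1) =
      c ^ x / x ! * (x * f x - c * f (x + 1)) := by
  rw [← Nat.mul_factorial_pred hx]
  have : (x : ℝ) ≠ 0 := Nat.cast_ne_zero.2 hx
  push_cast
  field_simp
  ring

theorem tendsto_rpow_mul_pow_div_factorial_atTop (q c : ℝ) :
    Tendsto (fun n : ℕ => (n : ℝ) ^ q * c ^ n / n !) atTop (𝓝 0) := by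
  have hexp : (fun n : ℕ => (n : ℝ) ^ q) =O[atTop] fun n : ℕ => Real.exp 1 ^ n := by
    simpa only [Function.comp_def, ← Real.exp_nat_mul, mul_one] using
      ((isLittleO_rpow_exp_atTop q).comp_tendsto tendsto_natCast_atTop_atTop).isBigO
  refine (hexp.mul (isBigO_refl (fun n : ℕ => c ^ n / n !) atTop)).trans_tendsto ?_
    |>.congr fun n => by ring
  simpa only [mul_pow, mul_div_assoc] using
    FloorSemiring.tendsto_pow_div_factorial_atTop (Real.exp 1 * c)

theorem tendsto_pow_div_factorial_pred_mul_of_isBigO {f : ℕ → ℝ} {q : ℝ} (c : ℝ)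
    (hf : f =O[atTop] fun n : ℕ => (n : ℝ) ^ q) :
    Tendsto (fun n : ℕ => c ^ n / (n - 1)! * f n) atTop (𝓝 0) := by
  refine ((isBigO_refl (fun n : ℕ => c ^ n / (n - 1)!) atTop).mul hf).trans_tendsto ?_
  refine (tendsto_rpow_mul_pow_div_factorial_atTop (q + 1) c).congr' ?_
  filter_upwards [eventually_ne_atTop 0] with n hn
  have : (n : ℝ) ≠ 0 := Nat.cast_ne_zero.2 hn
  rw [Real.rpow_add_one this, ← Nat.mul_factorial_pred hn]
  push_cast
  field_simp

theorem memE.summable_pow_mul_div_factorial {lam : ℝ} (hlam : 0 < lam) {h : ℕ → ℝ}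
    (hh : memE lam h) :
    Summable fun i : ℕ => lam ^ i * h i / i ! := by
  refine (summable_nat_add_iff 1).1 (Summable.of_norm ((hh 1).congr fun j => ?_))
  simp only [Polynomial.eval_one, mul_one, norm_div, norm_mul, norm_pow, Real.norm_eq_abs,
    abs_of_pos hlam, RCLike.norm_natCast]
  ring

/-- Every solution of `x·f(x) − λ·f(x+1) = h(x)` on `ℕ_*` is of the form
`f̃_h + C·(x−1)!/λ^x`; consequently if `h` has polynomial growth, `f̃_h` is the
unique solution of polynomial growth. -/
theorem stein_solution_unique (lam : ℝ) (hlam : 0 < lam) (h : ℕ → ℝ) (hh : memE lam h)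
    (f : ℕ → ℝ) (heq : ∀ x : ℕ, 1 ≤ x → (x : ℝ) * f x - lam * f (x + 1) = h x) :
    (∃ C : ℝ, ∀ x : ℕ, 1 ≤ x →
        f x = ftilde lam h x + C * ((x - 1).factorial : ℝ) / lam ^ x) ∧
      ((∃ p : ℝ, (fun x : ℕ => h x) =O[atTop] fun x : ℕ => (x : ℝ) ^ p) →
        (∃ q : ℝ, (fun x : ℕ => f x) =O[atTop] fun x : ℕ => (x : ℝ) ^ q) →
          ∀ x : ℕ, 1 ≤ x → f x = ftilde lam h x) := by
  set u : ℕ → ℝ := fun x => lam ^ x / (x - 1)! * f x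
  have hu : ∀ x, 1 ≤ x → u x - u (x + 1) = lam ^ x * h x / x ! := fun x hx => by
    simp only [u, Nat.add_sub_cancel]
    rw [pow_div_factorial_pred_mul_sub lam f (Nat.one_le_iff_ne_zero.1 hx), heq x hx]
    ring
  obtain ⟨C, hC⟩ := (hh.summable_pow_mul_div_factorial hlam).exists_eq_tsum_nat_add_add_const hu
  have hf : ∀ x, 1 ≤ x → f x = ftilde lam h x + C * (x - 1)! / lam ^ x := fun x hx => by
    have hfu : f x = (x - 1)! / lam ^ x * u x := by
      simp only [u]
      field_simp
    rw [hfu, hC x hx, ftilde]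
    ring
  refine ⟨⟨C, hf⟩, fun _ ⟨q, hq⟩ x hx => ?_⟩
  have hCu : Tendsto u atTop (𝓝 (0 + C)) := by
    refine (tendsto_sum_nat_add fun i => lam ^ i * h i / i !).add_const C |>.congr' ?_
    filter_upwards [eventually_ge_atTop 1] with n hn
    simp only [add_comm _ n, hC n hn]
  have hC0 : 0 + C = 0 :=
    tendsto_nhds_unique hCu (tendsto_pow_div_factorial_pred_mul_of_isBigO lam hq)
  rw [hf x hx, ← zero_add C, hC0]
  ring
end

section
/- Let λ > 0 and p ∈ ℝ. If h : ℕ_* → ℝ satisfies h(x) = O(x^p) as x → ∞, then f̃_h(x) = O(x^{p−1}), where f̃_h(x) = ((x−1)!/λ^x)·Σ_{i=x}^∞ (λ^i/i!)·h(i). -/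
open Filter

open Asymptotics Real Nat

/-!
Let `|h n| ≤ C n ^ p` for large `n` and fix an integer `m ≥ p`. Since
`(x + j) ^ p ≤ x ^ p * (2 ^ m) ^ j` for `x ≥ 1` and `x ! * j ! ≤ (x + j)!`, the `j`-th term of the tail series is dominated by
`λ ^ x / x ! * C x ^ p * (2 ^ m λ) ^ j / j !`. Summing the exponential series gives
`|f̃_h(x)| ≤ C e ^ (2 ^ m λ) x ^ p (x - 1)! / x ! = C e ^ (2 ^ m λ) x ^ (p - 1)`.
-/

lemma Nat.factorial_mul_factorial_le_factorial_add (i j : ℕ) : i ! * j ! ≤ (i + j)! :=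
  Nat.le_of_dvd (Nat.factorial_pos _) (Nat.factorial_mul_factorial_dvd_factorial_add i j)

lemma Real.hasSum_pow_div_factorial (x : ℝ) : HasSum (fun n : ℕ => x ^ n / n !) (exp x) :=
  Real.exp_eq_exp_ℝ ▸ NormedSpace.expSeries_div_hasSum_exp x

lemma Real.add_natCast_rpow_le {x p : ℝ} {m : ℕ} (hx : 1 ≤ x) (hp : p ≤ m) (j : ℕ) :
    (x + j) ^ p ≤ x ^ p * ((2 : ℝ) ^ m) ^ j := by
  have hx0 : 0 < x := by linarith
  have hratio : 1 ≤ 1 + j / x := le_add_of_nonneg_right (by positivity)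
  have hratio_le : 1 + j / x ≤ 2 ^ j := calc
    1 + j / x ≤ 1 + j := by gcongr; exact div_le_self (by positivity) hx
    _ ≤ 2 ^ j := by exact_mod_cast Nat.one_add_le_iff.mpr Nat.lt_two_pow_self
  calc (x + j) ^ p = x ^ p * (1 + j / x) ^ p := by
        rw [← Real.mul_rpow hx0.le (by positivity), mul_add, mul_div_cancel₀ _ hx0.ne', mul_one]
    _ ≤ x ^ p * (1 + j / x) ^ (m : ℝ) := by gcongr
    _ = x ^ p * (1 + j / x) ^ m := by rw [Real.rpow_natCast]
    _ ≤ x ^ p * ((2 : ℝ) ^ j) ^ m := by gcongr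
    _ = x ^ p * ((2 : ℝ) ^ m) ^ j := by rw [← pow_mul, ← pow_mul, mul_comm j]

section Tail

variable {lam C p : ℝ} {m x : ℕ}

lemma norm_tail_term_le (hlam : 0 < lam) (hC : 0 ≤ C) (hx : 1 ≤ x) (hp : p ≤ m) (j : ℕ)
    {y : ℝ} (hy : ‖y‖ ≤ C * ((x + j : ℕ) : ℝ) ^ p) :
    ‖lam ^ (x + j) * y / (x + j)!‖ ≤ lam ^ x / x ! * (C * x ^ p) * ((2 ^ m * lam) ^ j / j !) := by
  have hx' : (1 : ℝ) ≤ x := by exact_mod_cast hx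
  have hfac : ((x ! * j ! : ℕ) : ℝ) ≤ (x + j)! := by
    exact_mod_cast Nat.factorial_mul_factorial_le_factorial_add x j
  push_cast at hy hfac
  calc ‖lam ^ (x + j) * y / (x + j)!‖ = lam ^ (x + j) * ‖y‖ / (x + j)! := by
        rw [norm_div, norm_mul, norm_pow, Real.norm_of_nonneg hlam.le, Real.norm_natCast]
    _ ≤ lam ^ (x + j) * (C * (x ^ p * ((2 : ℝ) ^ m) ^ j)) / (x ! * j !) := by
        gcongr
        exact hy.trans (by gcongr; exact Real.add_natCast_rpow_le hx' hp j)
    _ = lam ^ x / x ! * (C * x ^ p) * ((2 ^ m * lam) ^ j / j !) := by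
        rw [pow_add, mul_pow]; field_simp

lemma norm_tsum_tail_le (hlam : 0 < lam) (hC : 0 ≤ C) (hx : 1 ≤ x) (hp : p ≤ m)
    {h : ℕ → ℝ} (hh : ∀ n ≥ x, ‖h n‖ ≤ C * (n : ℝ) ^ p) :
    ‖∑' j : ℕ, lam ^ (x + j) * h (x + j) / (x + j)!‖ ≤
      lam ^ x / x ! * (C * x ^ p) * exp (2 ^ m * lam) := by
  have hterm (j : ℕ) := norm_tail_term_le hlam hC hx hp j (hh (x + j) (Nat.le_add_right x j))
  have hmajor := (Real.hasSum_pow_div_factorial (2 ^ m * lam)).mul_left (lam ^ x / x ! * (C * x ^ p))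
  have hsum := hmajor.summable.of_nonneg_of_le (fun _ => norm_nonneg _) hterm
  calc _ ≤ ∑' j : ℕ, ‖lam ^ (x + j) * h (x + j) / (x + j)!‖ := norm_tsum_le_tsum_norm hsum
    _ ≤ _ := (hsum.tsum_le_tsum hterm hmajor.summable).trans_eq hmajor.tsum_eq

end Tail

lemma factorial_pred_div_factorial_mul_rpow {x : ℕ} (hx : 1 ≤ x) (p : ℝ) :
    ((x - 1)! : ℝ) / x ! * (x : ℝ) ^ p = (x : ℝ) ^ (p - 1) := by
  have hx0 : (0 : ℝ) < x := by exact_mod_cast hx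
  rw [← Nat.mul_factorial_pred (by omega : x ≠ 0), Nat.cast_mul, Real.rpow_sub_one hx0.ne']
  field_simp

/-- If `h(x) = O(x^p)` then `f̃_h(x) = O(x^{p−1})`. -/
theorem ftilde_isBigO (lam : ℝ) (hlam : 0 < lam) (p : ℝ) (h : ℕ → ℝ)
    (hh : (fun x : ℕ => h x) =O[atTop] fun x : ℕ => (x : ℝ) ^ p) :
    (fun x : ℕ => ftilde lam h x) =O[atTop] fun x : ℕ => (x : ℝ) ^ (p - 1) := by
  obtain ⟨C, hC, hCb⟩ := hh.exists_pos
  obtain ⟨N, hN⟩ := eventually_atTop.1 hCb.bound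
  obtain ⟨m, hm⟩ := exists_nat_ge p
  refine IsBigO.of_bound (C * exp (2 ^ m * lam)) ?_
  filter_upwards [eventually_ge_atTop (max N 1)] with x hx
  have hx1 : 1 ≤ x := le_of_max_le_right hx
  have htail := norm_tsum_tail_le hlam hC.le hx1 hm (h := h) fun n hn => by
    simpa [Real.norm_of_nonneg (Real.rpow_nonneg n.cast_nonneg p)] using
      hN n ((le_of_max_le_left hx).trans hn)
  calc ‖ftilde lam h x‖
      = (x - 1)! / lam ^ x * ‖∑' j : ℕ, lam ^ (x + j) * h (x + j) / (x + j)!‖ := by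
        rw [ftilde, norm_mul, Real.norm_of_nonneg (by positivity)]
    _ ≤ (x - 1)! / lam ^ x * (lam ^ x / x ! * (C * x ^ p) * exp (2 ^ m * lam)) := by gcongr
    _ = C * exp (2 ^ m * lam) * ((x - 1)! / x ! * (x : ℝ) ^ p) := by
        field_simp
    _ = C * exp (2 ^ m * lam) * ‖(x : ℝ) ^ (p - 1)‖ := by
        rw [factorial_pred_div_factorial_mul_rpow hx1,
          Real.norm_of_nonneg (Real.rpow_nonneg x.cast_nonneg _)]
end

section
/- Let λ > 0, p ≥ 0, and h : ℕ → ℝ with h(x) = O(x^p). Let f_h be the Stein solution f_h(x) = ((x−1)!/λ^x)·Σ_{i=x}^∞ (λ^i/i!)·(h(i) − P_λ(h)) for x ≥ 1. Then f_h(x) = O(x^{p−1}); in particular f_h(x) = O(x^p). -/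
/-!
Write `f_h = f̃_g` for the centred `g = h − P_λ(h)`, which is `O((i + 1)^p)` on all of `ℕ`.
After the substitution `i = x + j`, `f̃_g(x) = Σ_j λ^j (x − 1)!/(x + j)! · g(x + j)`, and
`(x + j)! ≥ (x − 1)! x^(j+1)` bounds the `j`-th weight by `(λ/x)^j / x ≤ 2^(-j) / x` once `x ≥ 2λ`.
Together with `|g(x + j)| ≤ C x^p (j + 2)^p` this gives `|f_h(x)| ≤ C x^(p−1) Σ_j (j + 2)^p 2^(-j)`.
-/

open Filter

noncomputable section

open Asymptotics

lemma isBigO_natCast_rpow_rpow {q r : ℝ} (hqr : q ≤ r) :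
    (fun x : ℕ => (x : ℝ) ^ q) =O[atTop] fun x : ℕ => (x : ℝ) ^ r := by
  refine IsBigO.of_bound 1 ?_
  filter_upwards [eventually_ge_atTop 1] with x hx
  have hx : (1 : ℝ) ≤ x := mod_cast hx
  rw [one_mul, Real.norm_of_nonneg (by positivity), Real.norm_of_nonneg (by positivity)]
  exact Real.rpow_le_rpow_of_exponent_le hx hqr

lemma const_isBigO_natCast_rpow (c : ℝ) {p : ℝ} (hp : 0 ≤ p) :
    (fun _ : ℕ => c) =O[atTop] fun x : ℕ => (x : ℝ) ^ p := by
  refine (isBigO_const_one ℝ c atTop).trans ?_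
  simpa only [Real.rpow_zero] using isBigO_natCast_rpow_rpow hp

lemma exists_abs_le_mul_add_one_rpow {g : ℕ → ℝ} {p : ℝ} (hp : 0 ≤ p)
    (hg : g =O[atTop] fun x : ℕ => (x : ℝ) ^ p) :
    ∃ C, ∀ i : ℕ, |g i| ≤ C * ((i : ℝ) + 1) ^ p := by
  have hshift : (fun x : ℕ => (x : ℝ) ^ p) =O[atTop] fun x : ℕ => ((x : ℝ) + 1) ^ p :=
    IsBigO.of_bound 1 <| Eventually.of_forall fun x => by
      rw [one_mul, Real.norm_of_nonneg (by positivity), Real.norm_of_nonneg (by positivity)]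
      exact Real.rpow_le_rpow (by positivity) (by linarith) hp
  -- `(x + 1) ^ p` never vanishes, so the bound at infinity extends to all of `ℕ`.
  obtain ⟨C, hC⟩ := (isBigO_nat_atTop_iff fun x hx =>
    absurd hx (Real.rpow_pos_of_pos x.cast_add_one_pos p).ne').1 (hg.trans hshift)
  refine ⟨C, fun i => ?_⟩
  simpa only [Real.norm_eq_abs, abs_of_nonneg (by positivity : (0 : ℝ) ≤ ((i : ℝ) + 1) ^ p)]
    using hC i

lemma summable_add_two_rpow_mul_pow (p : ℝ) {r : ℝ} (hr₀ : 0 < r) (hr₁ : r < 1) :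
    Summable fun j : ℕ => ((j : ℝ) + 2) ^ p * r ^ j := by
  set m := ⌈p⌉₊
  have hnatPow : Summable fun j : ℕ => ((j : ℝ) + 2) ^ m * r ^ j := by
    have hgeom : Summable fun n : ℕ => (n : ℝ) ^ m * r ^ n :=
      summable_pow_mul_geometric_of_norm_lt_one m (by rwa [Real.norm_of_nonneg hr₀.le])
    refine (((summable_nat_add_iff 2).2 hgeom).div_const (r ^ 2)).congr fun j => ?_
    push_cast
    field_simp
    ring
  refine hnatPow.of_nonneg_of_le (fun j => by positivity) fun j => ?_
  refine mul_le_mul_of_nonneg_right ?_ (by positivity)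
  rw [← Real.rpow_natCast]
  exact Real.rpow_le_rpow_of_exponent_le (by linarith [j.cast_nonneg (α := ℝ)]) (Nat.le_ceil p)

lemma pow_mul_factorial_sub_one_div_factorial_add_le {lam : ℝ} (hlam : 0 ≤ lam) {x : ℕ}
    (hx : 1 ≤ x) (j : ℕ) :
    lam ^ j * ((x - 1).factorial : ℝ) / ((x + j).factorial : ℝ) ≤ (lam / x) ^ j / x := by
  have hfact : ((x - 1).factorial : ℝ) * (x : ℝ) ^ (j + 1) ≤ ((x + j).factorial : ℝ) := by
    have := @Nat.factorial_mul_pow_le_factorial (x - 1) (j + 1)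
    rw [Nat.sub_add_cancel hx, show x - 1 + (j + 1) = x + j by omega] at this
    exact_mod_cast this
  have hx0 : (0 : ℝ) < x := by exact_mod_cast hx
  rw [div_pow, div_div, ← pow_succ, div_le_div_iff₀ (by positivity) (by positivity), mul_assoc]
  exact mul_le_mul_of_nonneg_left hfact (by positivity)

def steinTail (lam : ℝ) (a : ℕ → ℝ) (x : ℕ) : ℝ :=
  ((x - 1).factorial : ℝ) / lam ^ x *
    ∑' j : ℕ, lam ^ (x + j) * a (x + j) / ((x + j).factorial : ℝ)

lemma steinSol_eq_steinTail (lam : ℝ) (h : ℕ → ℝ) :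
    steinSol lam h = steinTail lam fun i => h i - poissonExp lam h :=
  rfl

lemma steinTail_eq_tsum {lam : ℝ} (hlam : lam ≠ 0) (a : ℕ → ℝ) (x : ℕ) :
    steinTail lam a x =
      ∑' j : ℕ, lam ^ j * ((x - 1).factorial : ℝ) / ((x + j).factorial : ℝ) * a (x + j) := by
  rw [steinTail, ← tsum_mul_left]
  congr 1 with j
  rw [pow_add]
  field_simp

lemma abs_steinTail_le {lam p C : ℝ} (hlam : 0 < lam) (hp : 0 ≤ p) {a : ℕ → ℝ}
    (ha : ∀ i : ℕ, |a i| ≤ C * ((i : ℝ) + 1) ^ p) {x : ℕ} (hx₁ : 1 ≤ x) (hx : 2 * lam ≤ x) :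
    |steinTail lam a x| ≤ C * (∑' j : ℕ, ((j : ℝ) + 2) ^ p * (1 / 2) ^ j) * (x : ℝ) ^ (p - 1) := by
  have hx₀ : (0 : ℝ) < x := by exact_mod_cast hx₁
  have hterm : ∀ j : ℕ,
      ‖lam ^ j * ((x - 1).factorial : ℝ) / ((x + j).factorial : ℝ) * a (x + j)‖ ≤
        C * (x : ℝ) ^ (p - 1) * (((j : ℝ) + 2) ^ p * (1 / 2) ^ j) := by
    intro j
    have hweight : lam ^ j * ((x - 1).factorial : ℝ) / ((x + j).factorial : ℝ) ≤ (1 / 2) ^ j / x := by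
      have hratio : lam / x ≤ 1 / 2 := by rw [div_le_iff₀ hx₀]; linarith
      refine (pow_mul_factorial_sub_one_div_factorial_add_le hlam.le hx₁ j).trans ?_
      gcongr
    have hgrowth : |a (x + j)| ≤ C * ((x : ℝ) ^ p * ((j : ℝ) + 2) ^ p) := by
      refine (ha (x + j)).trans ?_
      have hCnonneg : 0 ≤ C := (abs_nonneg _).trans <| by simpa using ha 0
      rw [← Real.mul_rpow hx₀.le (by positivity)]
      gcongr
      have : (1 : ℝ) ≤ x := by exact_mod_cast hx₁
      push_cast
      nlinarith [j.cast_nonneg (α := ℝ)]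
    rw [Real.norm_eq_abs, abs_mul, abs_of_nonneg (by positivity)]
    calc _ ≤ (1 / 2) ^ j / x * (C * ((x : ℝ) ^ p * ((j : ℝ) + 2) ^ p)) :=
          mul_le_mul hweight hgrowth (abs_nonneg _) (by positivity)
      _ = C * (x : ℝ) ^ (p - 1) * (((j : ℝ) + 2) ^ p * (1 / 2) ^ j) := by
          rw [Real.rpow_sub_one hx₀.ne']
          ring
  have hsum := (summable_add_two_rpow_mul_pow p one_half_pos one_half_lt_one).hasSum.mul_left
    (C * (x : ℝ) ^ (p - 1))
  rw [steinTail_eq_tsum hlam.ne', ← Real.norm_eq_abs]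
  refine (tsum_of_norm_bounded hsum hterm).trans_eq ?_
  ring

lemma steinTail_isBigO {lam p : ℝ} (hlam : 0 < lam) (hp : 0 ≤ p) {a : ℕ → ℝ}
    (ha : a =O[atTop] fun x : ℕ => (x : ℝ) ^ p) :
    steinTail lam a =O[atTop] fun x : ℕ => (x : ℝ) ^ (p - 1) := by
  obtain ⟨C, hC⟩ := exists_abs_le_mul_add_one_rpow hp ha
  refine IsBigO.of_bound (C * ∑' j : ℕ, ((j : ℝ) + 2) ^ p * (1 / 2) ^ j) ?_
  filter_upwards [eventually_ge_atTop 1,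
    tendsto_natCast_atTop_atTop.eventually_ge_atTop (2 * lam)] with x hx₁ hx
  rw [Real.norm_eq_abs, Real.norm_of_nonneg (by positivity)]
  exact abs_steinTail_le hlam hp hC hx₁ hx

/-- If `h(x) = O(x^p)` with `p ≥ 0`, then the Stein solution satisfies
`f_h(x) = O(x^{p−1})`; in particular `f_h(x) = O(x^p)`. -/
theorem steinSol_isBigO (lam : ℝ) (hlam : 0 < lam) (p : ℝ) (hp : 0 ≤ p) (h : ℕ → ℝ)
    (hh : (fun x : ℕ => h x) =O[atTop] fun x : ℕ => (x : ℝ) ^ p) :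
    ((fun x : ℕ => steinSol lam h x) =O[atTop] fun x : ℕ => (x : ℝ) ^ (p - 1)) ∧
      ((fun x : ℕ => steinSol lam h x) =O[atTop] fun x : ℕ => (x : ℝ) ^ p) := by
  have hcentred : (fun i => h i - poissonExp lam h) =O[atTop] fun x : ℕ => (x : ℝ) ^ p :=
    hh.sub (const_isBigO_natCast_rpow _ hp)
  have hsharp := steinSol_eq_steinTail lam h ▸ steinTail_isBigO hlam hp hcentred
  exact ⟨hsharp, hsharp.trans (isBigO_natCast_rpow_rpow (by linarith))⟩
end
end
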